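/- Define, for a finite binary sequence s of length n ≥ 1, e^s = the zero sequence if s ends in 0 (or s is empty), and e^s_i = 0 for i < n, e^s_{n+j} = (9/10^n)·(1/2^{j+1}) for j ≥ 0 if s ends in 1; and set d_s = ∑_{1 ≤ k ≤ lh(s)} e^{s|k}_{lh(s)}. Then for every x ∈ {0,1}^ℕ, ∑_{n=1}^∞ d_{x|n} = ∑_{k : x_k = 1} 9/10^k. -/

import Mathlib

/-!
`d_{x|n+1}` is the `n`-th term of the Cauchy product of the weights
`a_k = [x_{k+1} = 1] · 9/10^(k+1)` with the sequence `1/2^(j+1)`. Both series converge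
absolutely and the second sums to `1`, so the series of the `d_{x|n}` converges to `∑ a_k`.
-/

/-- `d_{x|n}` for a binary sequence `x` (with coordinates indexed from 1):
`d_s = ∑_{1 ≤ k ≤ lh(s)} e^{s|k}_{lh(s)}`, where `e^{s|k}` is the zero sequence
if `s_k = 0`, and `e^{s|k}_i = (9/10^k)·(1/2^{i-k+1})` for `i ≥ k` if `s_k = 1`. -/
noncomputable def dAddr (x : ℕ → Bool) (n : ℕ) : ℝ :=
  ∑ k ∈ Finset.Icc 1 n, (if x k then (9 / 10 ^ k : ℝ) * (1 / 2 ^ (n - k + 1)) else 0)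

open Finset

theorem hasSum_sum_range_mul_one_div_two_pow_succ {a : ℕ → ℝ}
    (ha : Summable fun k ↦ ‖a k‖) :
    HasSum (fun n ↦ ∑ k ∈ range (n + 1), a k * (1 / 2 ^ (n - k + 1))) (∑' k, a k) := by
  have hhalf (j : ℕ) : (1 : ℝ) / 2 ^ (j + 1) = 1 / 2 / 2 ^ j := by ring
  have hg : Summable fun j : ℕ ↦ ‖(1 : ℝ) / 2 ^ (j + 1)‖ := by
    simpa [hhalf] using summable_geometric_two' 1
  have hg1 : ∑' j : ℕ, (1 : ℝ) / 2 ^ (j + 1) = 1 := by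
    simpa [hhalf] using tsum_geometric_two' 1
  simpa only [hg1, mul_one] using hasSum_sum_range_mul_of_summable_norm ha hg

theorem summable_norm_ite_nine_div_ten_pow (p : ℕ → Prop) [DecidablePred p] :
    Summable fun k ↦ ‖if p k then (9 : ℝ) / 10 ^ (k + 1) else 0‖ := by
  have hgeom : Summable fun k : ℕ ↦ 9 / 10 * (10 : ℝ)⁻¹ ^ k :=
    (summable_geometric_of_lt_one (by norm_num) (by norm_num)).mul_left _
  refine Summable.of_nonneg_of_le (fun _ ↦ norm_nonneg _) (fun k ↦ ?_) hgeom
  split_ifs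
  · rw [Real.norm_of_nonneg (by positivity)]
    exact le_of_eq (by rw [pow_succ, inv_pow]; field_simp)
  · simp

theorem dAddr_succ (x : ℕ → Bool) (n : ℕ) :
    dAddr x (n + 1) = ∑ k ∈ range (n + 1),
      (if x (k + 1) then (9 : ℝ) / 10 ^ (k + 1) else 0) * (1 / 2 ^ (n - k + 1)) := by
  rw [dAddr, ← Ico_add_one_right_eq_Icc, sum_Ico_eq_sum_range, Nat.add_sub_cancel]
  refine sum_congr rfl fun k _ ↦ ?_
  rw [add_comm 1 k, Nat.add_sub_add_right]
  split_ifs <;> simp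

/-- For every `x ∈ {0,1}^ℕ`, `∑_{n=1}^∞ d_{x|n} = ∑_{k : x_k = 1} 9/10^k`
(all series converging). -/
theorem stmt8 (x : ℕ → Bool) :
    Summable (fun n : ℕ => dAddr x (n + 1)) ∧
    ∑' n : ℕ, dAddr x (n + 1)
      = ∑' k : ℕ, (if x (k + 1) then (9 : ℝ) / 10 ^ (k + 1) else 0) := by
  have h := hasSum_sum_range_mul_one_div_two_pow_succ
    (summable_norm_ite_nine_div_ten_pow fun k ↦ x (k + 1) = true)
  rw [← funext (dAddr_succ x)] at h
  exact ⟨h.summable, h.tsum_eq⟩
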